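/- arXiv:2404.05109 — 2 statements merged into one kernel-verified Lean document; each statement's English description precedes it below -/
import Mathlib

section
/- Let E, H₁, H₂ be complex Hilbert spaces, let A ∈ B(E) be self-adjoint and invertible, and let B₁ ∈ B(H₁, E), C₁ ∈ B(E, H₁), C₂ ∈ B(E, H₂), D₁ ∈ B(H₁), D₂ ∈ B(H₂, H₁), D₃ ∈ B(H₂). Suppose the operator U on E ⊕ H₁ ⊕ H₂ defined by U(e, h₁, h₂) = (B₁ h₁, C₁ e + D₁ h₁ + D₂ h₂, C₂ e + D₃ h₂) is an isometry and that C₁*C₁ = A² and C₁ A⁻² C₁* D₂ = D₂. Then the operator U₁ on E ⊕ H₁ defined by U₁(e, h₁) = (B₁ h₁, C₁ A⁻¹ e + D₁ h₁) is an isometry. -/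
open ContinuousLinearMap

/-!
Restricting the isometry `U` to `E ⊕ H₁ ⊕ 0` and to `E ⊕ 0 ⊕ 0` and subtracting shows
`‖B₁ h‖² + ‖C₁ e + D₁ h‖² = ‖C₁ e‖² + ‖h‖²`. Since `C₁*C₁ = A² = A*A`, `C₁ A⁻¹` is an isometry,
so substituting `e = A⁻¹ x` gives `‖U₁ (x, h)‖² = ‖x‖² + ‖h‖²`.
-/

/-- The element `(x, y)` of the Hilbert-space direct sum `X ⊕ Y`,
modelled as `WithLp 2 (X × Y)`. -/
noncomputable def mk2 {X Y : Type*} (x : X) (y : Y) : WithLp 2 (X × Y) :=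
  (WithLp.equiv 2 (X × Y)).symm (x, y)

/-- The element `(e, h₁, h₂)` of the Hilbert-space direct sum `E ⊕ H₁ ⊕ H₂`,
modelled as `WithLp 2 (E × WithLp 2 (H₁ × H₂))`. -/
noncomputable def mk3 {E H₁ H₂ : Type*} (e : E) (h₁ : H₁) (h₂ : H₂) :
    WithLp 2 (E × WithLp 2 (H₁ × H₂)) :=
  (WithLp.equiv 2 _).symm (e, (WithLp.equiv 2 (H₁ × H₂)).symm (h₁, h₂))

theorem norm_mk2_sq {X Y : Type*} [SeminormedAddCommGroup X] [SeminormedAddCommGroup Y]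
    (x : X) (y : Y) : ‖mk2 x y‖ ^ 2 = ‖x‖ ^ 2 + ‖y‖ ^ 2 :=
  WithLp.prod_norm_sq_eq_of_L2 _

theorem norm_mk3_sq {E H₁ H₂ : Type*} [SeminormedAddCommGroup E] [SeminormedAddCommGroup H₁]
    [SeminormedAddCommGroup H₂] (e : E) (h₁ : H₁) (h₂ : H₂) :
    ‖mk3 e h₁ h₂‖ ^ 2 = ‖e‖ ^ 2 + ‖h₁‖ ^ 2 + ‖h₂‖ ^ 2 := by
  rw [show mk3 e h₁ h₂ = mk2 e (mk2 h₁ h₂) from rfl, norm_mk2_sq, norm_mk2_sq, add_assoc]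

theorem ContinuousLinearMap.norm_apply_eq_of_adjoint_comp_self_eq {𝕜 E F G : Type*} [RCLike 𝕜]
    [NormedAddCommGroup E] [InnerProductSpace 𝕜 E] [CompleteSpace E]
    [NormedAddCommGroup F] [InnerProductSpace 𝕜 F] [CompleteSpace F]
    [NormedAddCommGroup G] [InnerProductSpace 𝕜 G] [CompleteSpace G]
    {S : E →L[𝕜] F} {T : E →L[𝕜] G} (h : adjoint S ∘L S = adjoint T ∘L T) (x : E) :
    ‖S x‖ = ‖T x‖ := by
  rw [← sq_eq_sq₀ (norm_nonneg _) (norm_nonneg _), apply_norm_sq_eq_inner_adjoint_left,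
    apply_norm_sq_eq_inner_adjoint_left, h]

section BlockIsometry

variable {𝕜 E H₁ H₂ : Type*} [NormedField 𝕜]
    [SeminormedAddCommGroup E] [NormedSpace 𝕜 E]
    [SeminormedAddCommGroup H₁] [NormedSpace 𝕜 H₁]
    [SeminormedAddCommGroup H₂] [NormedSpace 𝕜 H₂]
    {B₁ : H₁ →L[𝕜] E} {C₁ : E →L[𝕜] H₁} {C₂ : E →L[𝕜] H₂}
    {D₁ : H₁ →L[𝕜] H₁} {D₂ : H₂ →L[𝕜] H₁} {D₃ : H₂ →L[𝕜] H₂}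
    {U : WithLp 2 (E × WithLp 2 (H₁ × H₂)) →L[𝕜] WithLp 2 (E × WithLp 2 (H₁ × H₂))}

theorem norm_sq_blocks_of_isometry
    (hU : ∀ e h₁ h₂, U (mk3 e h₁ h₂) = mk3 (B₁ h₁) (C₁ e + D₁ h₁ + D₂ h₂) (C₂ e + D₃ h₂))
    (hIso : Isometry U) (e : E) (h₁ : H₁) (h₂ : H₂) :
    ‖B₁ h₁‖ ^ 2 + ‖C₁ e + D₁ h₁ + D₂ h₂‖ ^ 2 + ‖C₂ e + D₃ h₂‖ ^ 2
      = ‖e‖ ^ 2 + ‖h₁‖ ^ 2 + ‖h₂‖ ^ 2 := by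
  rw [← norm_mk3_sq, ← norm_mk3_sq, ← hU, hIso.norm_map_of_map_zero (map_zero U)]

theorem norm_sq_compression_of_isometry
    (hU : ∀ e h₁ h₂, U (mk3 e h₁ h₂) = mk3 (B₁ h₁) (C₁ e + D₁ h₁ + D₂ h₂) (C₂ e + D₃ h₂))
    (hIso : Isometry U) (e : E) (h : H₁) :
    ‖B₁ h‖ ^ 2 + ‖C₁ e + D₁ h‖ ^ 2 = ‖C₁ e‖ ^ 2 + ‖h‖ ^ 2 := by
  have hEH₁ := norm_sq_blocks_of_isometry hU hIso e h 0
  have hE := norm_sq_blocks_of_isometry hU hIso e 0 0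
  simp only [map_zero, add_zero, norm_zero] at hEH₁ hE
  linarith

end BlockIsometry

theorem statement4_general
    {E H₁ H₂ : Type*}
    [NormedAddCommGroup E] [InnerProductSpace ℂ E] [CompleteSpace E]
    [NormedAddCommGroup H₁] [InnerProductSpace ℂ H₁] [CompleteSpace H₁]
    [NormedAddCommGroup H₂] [InnerProductSpace ℂ H₂] [CompleteSpace H₂]
    (A A' : E →L[ℂ] E) (hA : IsSelfAdjoint A)
    (hAA' : A ∘L A' = ContinuousLinearMap.id ℂ E)
    (B₁ : H₁ →L[ℂ] E) (C₁ : E →L[ℂ] H₁) (C₂ : E →L[ℂ] H₂)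
    (D₁ : H₁ →L[ℂ] H₁) (D₂ : H₂ →L[ℂ] H₁) (D₃ : H₂ →L[ℂ] H₂)
    (U : WithLp 2 (E × WithLp 2 (H₁ × H₂)) →L[ℂ] WithLp 2 (E × WithLp 2 (H₁ × H₂)))
    (hU : ∀ (e : E) (h₁ : H₁) (h₂ : H₂),
      U (mk3 e h₁ h₂) = mk3 (B₁ h₁) (C₁ e + D₁ h₁ + D₂ h₂) (C₂ e + D₃ h₂))
    (hIso : Isometry U)
    (hC₁ : adjoint C₁ ∘L C₁ = A ∘L A)
    (U₁ : WithLp 2 (E × H₁) →L[ℂ] WithLp 2 (E × H₁))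
    (hU₁ : ∀ (e : E) (h₁ : H₁), U₁ (mk2 e h₁) = mk2 (B₁ h₁) (C₁ (A' e) + D₁ h₁)) :
    Isometry U₁ := by
  have hC₁A' (x : E) : ‖C₁ (A' x)‖ = ‖x‖ := by
    rw [norm_apply_eq_of_adjoint_comp_self_eq (T := A) (by rw [hC₁, hA.adjoint_eq]),
      ← comp_apply, hAA', id_apply]
  refine AddMonoidHomClass.isometry_of_norm U₁ fun x => ?_
  rw [← sq_eq_sq₀ (norm_nonneg _) (norm_nonneg _), show x = mk2 x.fst x.snd from rfl, hU₁,
    norm_mk2_sq, norm_mk2_sq, norm_sq_compression_of_isometry hU hIso, hC₁A']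

/-- Let `A ∈ B(E)` be self-adjoint and invertible (with inverse `A'`).
If `U(e, h₁, h₂) = (B₁ h₁, C₁ e + D₁ h₁ + D₂ h₂, C₂ e + D₃ h₂)` is an isometry,
`C₁*C₁ = A²` and `C₁ A⁻² C₁* D₂ = D₂`, then `U₁(e, h₁) = (B₁ h₁, C₁ A⁻¹ e + D₁ h₁)`
is an isometry on `E ⊕ H₁`. -/
theorem statement4
    {E H₁ H₂ : Type*}
    [NormedAddCommGroup E] [InnerProductSpace ℂ E] [CompleteSpace E]
    [NormedAddCommGroup H₁] [InnerProductSpace ℂ H₁] [CompleteSpace H₁]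
    [NormedAddCommGroup H₂] [InnerProductSpace ℂ H₂] [CompleteSpace H₂]
    (A A' : E →L[ℂ] E) (hA : IsSelfAdjoint A)
    (hAA' : A ∘L A' = ContinuousLinearMap.id ℂ E)
    (hA'A : A' ∘L A = ContinuousLinearMap.id ℂ E)
    (B₁ : H₁ →L[ℂ] E) (C₁ : E →L[ℂ] H₁) (C₂ : E →L[ℂ] H₂)
    (D₁ : H₁ →L[ℂ] H₁) (D₂ : H₂ →L[ℂ] H₁) (D₃ : H₂ →L[ℂ] H₂)
    (U : WithLp 2 (E × WithLp 2 (H₁ × H₂)) →L[ℂ] WithLp 2 (E × WithLp 2 (H₁ × H₂)))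
    (hU : ∀ (e : E) (h₁ : H₁) (h₂ : H₂),
      U (mk3 e h₁ h₂) = mk3 (B₁ h₁) (C₁ e + D₁ h₁ + D₂ h₂) (C₂ e + D₃ h₂))
    (hIso : Isometry U)
    (hC₁ : adjoint C₁ ∘L C₁ = A ∘L A)
    (hD₂ : C₁ ∘L (A' ∘L A') ∘L adjoint C₁ ∘L D₂ = D₂)
    (U₁ : WithLp 2 (E × H₁) →L[ℂ] WithLp 2 (E × H₁))
    (hU₁ : ∀ (e : E) (h₁ : H₁), U₁ (mk2 e h₁) = mk2 (B₁ h₁) (C₁ (A' e) + D₁ h₁)) :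
    Isometry U₁ :=
  statement4_general A A' hA hAA' B₁ C₁ C₂ D₁ D₂ D₃ U hU hIso hC₁ U₁ hU₁
end

section
/- Let E, H₁, H₂ be complex Hilbert spaces. Suppose U₁ on E ⊕ H₁ given by U₁(e, h₁) = (B₁ h₁, C₁ e + D₁ h₁) is an isometry (where B₁ ∈ B(H₁, E), C₁ ∈ B(E, H₁), D₁ ∈ B(H₁)), and U₂ on E ⊕ H₂ given by U₂(e, h₂) = (B₂ h₂, C₂ e + D₂ h₂) is an isometry (where B₂ ∈ B(H₂, E), C₂ ∈ B(E, H₂), D₂ ∈ B(H₂)). Then: (i) the operator U on E ⊕ H₁ ⊕ H₂ defined by U(e, h₁, h₂) = (B₁ h₁, D₁ h₁ + C₁ B₂ h₂, C₂ e + D₂ h₂) is an isometry; (ii) C₁*C₁ = I_E and C₁*D₁ = 0; in particular the block of U mapping H₂ into H₁ equals L ∘ B₂ where L := C₁ is an isometry satisfying L*D₁ = 0. -/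
open ContinuousLinearMap

/-! Polarising the isometry `(e, h) ↦ (B h, C e + D h)` shows that `C` is isometric
and that `ran C ⊥ ran D`. The middle component `D₁ h₁ + C₁ B₂ h₂` of `U` is therefore an
orthogonal sum, so `‖U(e, h₁, h₂)‖²` splits into `‖B₁ h₁‖² + ‖D₁ h₁‖² = ‖h₁‖²` and
`‖B₂ h₂‖² + ‖C₂ e + D₂ h₂‖² = ‖e‖² + ‖h₂‖²`. -/

open scoped InnerProductSpace

section DirectSum

variable {X Y Z : Type*} [SeminormedAddCommGroup X] [SeminormedAddCommGroup Y]
  [SeminormedAddCommGroup Z]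

theorem norm_sq_mk2 (x : X) (y : Y) : ‖mk2 x y‖ ^ 2 = ‖x‖ ^ 2 + ‖y‖ ^ 2 :=
  WithLp.prod_norm_sq_eq_of_L2 _

theorem norm_sq_mk3 (x : X) (y : Y) (z : Z) :
    ‖mk3 x y z‖ ^ 2 = ‖x‖ ^ 2 + ‖y‖ ^ 2 + ‖z‖ ^ 2 := by
  rw [WithLp.prod_norm_sq_eq_of_L2, add_assoc]
  exact congrArg (‖x‖ ^ 2 + ·) (norm_sq_mk2 y z)

end DirectSum

theorem mk3_fst_snd {X Y Z : Type*} (v : WithLp 2 (X × WithLp 2 (Y × Z))) :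
    mk3 v.fst v.snd.fst v.snd.snd = v :=
  rfl

section Colligation

variable {𝕜 E H : Type*} [RCLike 𝕜] [NormedAddCommGroup E] [InnerProductSpace 𝕜 E]
  [NormedAddCommGroup H] [InnerProductSpace 𝕜 H]

/-- The block operator `(e, h) ↦ (B h, C e + D h)` on `E ⊕ H` preserves inner products. -/
def IsIsometricColligation (B : H →L[𝕜] E) (C : E →L[𝕜] H) (D : H →L[𝕜] H) : Prop :=
  ∀ e e' h h', ⟪B h, B h'⟫_𝕜 + ⟪C e + D h, C e' + D h'⟫_𝕜 = ⟪e, e'⟫_𝕜 + ⟪h, h'⟫_𝕜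

variable {B : H →L[𝕜] E} {C : E →L[𝕜] H} {D : H →L[𝕜] H}

theorem IsIsometricColligation.of_isometry {U : WithLp 2 (E × H) →L[𝕜] WithLp 2 (E × H)}
    (hU : ∀ e h, U (mk2 e h) = mk2 (B h) (C e + D h)) (hIso : Isometry U) :
    IsIsometricColligation B C D := by
  intro e e' h h'
  have := (LinearMap.norm_map_iff_inner_map_map U).mp
    ((AddMonoidHomClass.isometry_iff_norm U).mp hIso) (mk2 e h) (mk2 e' h')
  rwa [hU, hU] at this

namespace IsIsometricColligation

theorem inner_map_map_left (hc : IsIsometricColligation B C D) (e e' : E) :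
    ⟪C e, C e'⟫_𝕜 = ⟪e, e'⟫_𝕜 := by
  simpa using hc e e' 0 0

theorem inner_left_right_eq_zero (hc : IsIsometricColligation B C D) (e : E) (h : H) :
    ⟪C e, D h⟫_𝕜 = 0 := by
  simpa using hc e 0 0 h

theorem norm_sq (hc : IsIsometricColligation B C D) (e : E) (h : H) :
    ‖B h‖ ^ 2 + ‖C e + D h‖ ^ 2 = ‖e‖ ^ 2 + ‖h‖ ^ 2 := by
  have := hc e e h h
  simp only [inner_self_eq_norm_sq_to_K] at this
  exact_mod_cast this

theorem isometry_left (hc : IsIsometricColligation B C D) : Isometry C :=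
  AddMonoidHomClass.isometry_of_norm C
    ((LinearMap.norm_map_iff_inner_map_map C).mpr hc.inner_map_map_left)

theorem adjoint_comp_self [CompleteSpace E] [CompleteSpace H]
    (hc : IsIsometricColligation B C D) : adjoint C ∘L C = 1 :=
  C.isometry_iff_adjoint_comp_self.mp hc.isometry_left

theorem adjoint_comp_eq_zero [CompleteSpace E] [CompleteSpace H]
    (hc : IsIsometricColligation B C D) : adjoint C ∘L D = 0 := by
  ext h
  refine ext_inner_left 𝕜 fun e => ?_
  rw [comp_apply, adjoint_inner_right, hc.inner_left_right_eq_zero, zero_apply, inner_zero_right]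

end IsIsometricColligation

section Cascade

variable {H₁ H₂ : Type*} [NormedAddCommGroup H₁] [InnerProductSpace 𝕜 H₁]
  [NormedAddCommGroup H₂] [InnerProductSpace 𝕜 H₂]
  {B₁ : H₁ →L[𝕜] E} {C₁ : E →L[𝕜] H₁} {D₁ : H₁ →L[𝕜] H₁}
  {B₂ : H₂ →L[𝕜] E} {C₂ : E →L[𝕜] H₂} {D₂ : H₂ →L[𝕜] H₂}

theorem IsIsometricColligation.norm_sq_cascade (hc₁ : IsIsometricColligation B₁ C₁ D₁)
    (hc₂ : IsIsometricColligation B₂ C₂ D₂) (e : E) (h₁ : H₁) (h₂ : H₂) :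
    ‖B₁ h₁‖ ^ 2 + ‖D₁ h₁ + C₁ (B₂ h₂)‖ ^ 2 + ‖C₂ e + D₂ h₂‖ ^ 2 =
      ‖e‖ ^ 2 + ‖h₁‖ ^ 2 + ‖h₂‖ ^ 2 := by
  have hmid : ‖D₁ h₁ + C₁ (B₂ h₂)‖ ^ 2 = ‖D₁ h₁‖ ^ 2 + ‖B₂ h₂‖ ^ 2 := by
    have horth : ⟪D₁ h₁, C₁ (B₂ h₂)⟫_𝕜 = 0 :=
      inner_eq_zero_symm.mp (hc₁.inner_left_right_eq_zero _ _)
    rw [sq, sq, sq, norm_add_sq_eq_norm_sq_add_norm_sq_of_inner_eq_zero _ _ horth,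
      hc₁.isometry_left.norm_map_of_map_zero (map_zero C₁)]
  have h₁_sq : ‖B₁ h₁‖ ^ 2 + ‖D₁ h₁‖ ^ 2 = ‖h₁‖ ^ 2 := by simpa using hc₁.norm_sq 0 h₁
  linarith [hc₂.norm_sq e h₂]

theorem IsIsometricColligation.isometry_cascade (hc₁ : IsIsometricColligation B₁ C₁ D₁)
    (hc₂ : IsIsometricColligation B₂ C₂ D₂)
    {U : WithLp 2 (E × WithLp 2 (H₁ × H₂)) →L[𝕜] WithLp 2 (E × WithLp 2 (H₁ × H₂))}
    (hU : ∀ e h₁ h₂, U (mk3 e h₁ h₂) = mk3 (B₁ h₁) (D₁ h₁ + C₁ (B₂ h₂)) (C₂ e + D₂ h₂)) :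
    Isometry U := by
  refine AddMonoidHomClass.isometry_of_norm U fun v => ?_
  rw [← mk3_fst_snd v, hU, ← sq_eq_sq₀ (norm_nonneg _) (norm_nonneg _), norm_sq_mk3,
    norm_sq_mk3]
  exact hc₁.norm_sq_cascade hc₂ _ _ _

end Cascade

end Colligation

theorem statement7_general
    {E H₁ H₂ : Type*}
    [NormedAddCommGroup E] [InnerProductSpace ℂ E] [CompleteSpace E]
    [NormedAddCommGroup H₁] [InnerProductSpace ℂ H₁] [CompleteSpace H₁]
    [NormedAddCommGroup H₂] [InnerProductSpace ℂ H₂]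
    (B₁ : H₁ →L[ℂ] E) (C₁ : E →L[ℂ] H₁) (D₁ : H₁ →L[ℂ] H₁)
    (B₂ : H₂ →L[ℂ] E) (C₂ : E →L[ℂ] H₂) (D₂ : H₂ →L[ℂ] H₂)
    (U₁ : WithLp 2 (E × H₁) →L[ℂ] WithLp 2 (E × H₁))
    (hU₁ : ∀ (e : E) (h₁ : H₁), U₁ (mk2 e h₁) = mk2 (B₁ h₁) (C₁ e + D₁ h₁))
    (hIso₁ : Isometry U₁)
    (U₂ : WithLp 2 (E × H₂) →L[ℂ] WithLp 2 (E × H₂))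
    (hU₂ : ∀ (e : E) (h₂ : H₂), U₂ (mk2 e h₂) = mk2 (B₂ h₂) (C₂ e + D₂ h₂))
    (hIso₂ : Isometry U₂)
    (U : WithLp 2 (E × WithLp 2 (H₁ × H₂)) →L[ℂ] WithLp 2 (E × WithLp 2 (H₁ × H₂)))
    (hU : ∀ (e : E) (h₁ : H₁) (h₂ : H₂),
      U (mk3 e h₁ h₂) = mk3 (B₁ h₁) (D₁ h₁ + C₁ (B₂ h₂)) (C₂ e + D₂ h₂)) :
    Isometry U ∧
    adjoint C₁ ∘L C₁ = ContinuousLinearMap.id ℂ E ∧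
    adjoint C₁ ∘L D₁ = 0 ∧
    Isometry C₁ ∧
    (∀ h₂ : H₂, U (mk3 (0 : E) (0 : H₁) h₂) = mk3 (0 : E) ((C₁ ∘L B₂) h₂) (D₂ h₂)) := by
  have hc₁ := IsIsometricColligation.of_isometry hU₁ hIso₁
  have hc₂ := IsIsometricColligation.of_isometry hU₂ hIso₂
  refine ⟨hc₁.isometry_cascade hc₂ hU, hc₁.adjoint_comp_self, hc₁.adjoint_comp_eq_zero,
    hc₁.isometry_left, fun h₂ => ?_⟩
  simp [hU]

/-- If `U₁(e, h₁) = (B₁ h₁, C₁ e + D₁ h₁)` and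
`U₂(e, h₂) = (B₂ h₂, C₂ e + D₂ h₂)` are isometries, then
(i) `U(e, h₁, h₂) = (B₁ h₁, D₁ h₁ + C₁ B₂ h₂, C₂ e + D₂ h₂)` is an isometry;
(ii) `C₁* C₁ = I` and `C₁* D₁ = 0`; in particular the block of `U` mapping `H₂`
into `H₁` equals `L ∘ B₂` where `L := C₁` is an isometry with `L* D₁ = 0`. -/
theorem statement7
    {E H₁ H₂ : Type*}
    [NormedAddCommGroup E] [InnerProductSpace ℂ E] [CompleteSpace E]
    [NormedAddCommGroup H₁] [InnerProductSpace ℂ H₁] [CompleteSpace H₁]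
    [NormedAddCommGroup H₂] [InnerProductSpace ℂ H₂] [CompleteSpace H₂]
    (B₁ : H₁ →L[ℂ] E) (C₁ : E →L[ℂ] H₁) (D₁ : H₁ →L[ℂ] H₁)
    (B₂ : H₂ →L[ℂ] E) (C₂ : E →L[ℂ] H₂) (D₂ : H₂ →L[ℂ] H₂)
    (U₁ : WithLp 2 (E × H₁) →L[ℂ] WithLp 2 (E × H₁))
    (hU₁ : ∀ (e : E) (h₁ : H₁), U₁ (mk2 e h₁) = mk2 (B₁ h₁) (C₁ e + D₁ h₁))
    (hIso₁ : Isometry U₁)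
    (U₂ : WithLp 2 (E × H₂) →L[ℂ] WithLp 2 (E × H₂))
    (hU₂ : ∀ (e : E) (h₂ : H₂), U₂ (mk2 e h₂) = mk2 (B₂ h₂) (C₂ e + D₂ h₂))
    (hIso₂ : Isometry U₂)
    (U : WithLp 2 (E × WithLp 2 (H₁ × H₂)) →L[ℂ] WithLp 2 (E × WithLp 2 (H₁ × H₂)))
    (hU : ∀ (e : E) (h₁ : H₁) (h₂ : H₂),
      U (mk3 e h₁ h₂) = mk3 (B₁ h₁) (D₁ h₁ + C₁ (B₂ h₂)) (C₂ e + D₂ h₂)) :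
    Isometry U ∧
    adjoint C₁ ∘L C₁ = ContinuousLinearMap.id ℂ E ∧
    adjoint C₁ ∘L D₁ = 0 ∧
    Isometry C₁ ∧
    (∀ h₂ : H₂, U (mk3 (0 : E) (0 : H₁) h₂) = mk3 (0 : E) ((C₁ ∘L B₂) h₂) (D₂ h₂)) :=
  statement7_general B₁ C₁ D₁ B₂ C₂ D₂ U₁ hU₁ hIso₁ U₂ hU₂ hIso₂ U hU
end
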